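/- For the type B_n root system with simple roots α_i = e_i − e_{i+1} (i < n) and α_n = e_n, if exactly the simple root α_k is painted noncompact, then the number of noncompact positive roots equals k(2n−2k+1), i.e., the noncompact positive roots are exactly those e_i ± e_j and e_i whose expansion in simple roots involves α_k an odd number of times. -/

import Mathlib

/-!
The coefficient of `α_k` in a vector `v` is the partial sum `v 0 + ⋯ + v k`, whose parity is
that of the number of indices `≤ k` in the support of `v`. So for `i < j` the root `e_i ± e_j` is
noncompact iff `i ≤ k < j`, and `e_i` is noncompact iff `i ≤ k`. The three families of positive
roots are told apart by their coordinate sums `0`, `2`, `1`, and each is parametrised injectively,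
so the count is `2 (k + 1) (n - k - 1) + (k + 1)`.
-/

def BnPosRoots (n : ℕ) : Finset (Fin n → ℤ) :=
  ((Finset.univ.filter (fun p : Fin n × Fin n => p.1 < p.2)).image
      (fun p => Pi.single p.1 (1 : ℤ) - Pi.single p.2 (1 : ℤ))) ∪
    ((Finset.univ.filter (fun p : Fin n × Fin n => p.1 < p.2)).image
      (fun p => Pi.single p.1 (1 : ℤ) + Pi.single p.2 (1 : ℤ))) ∪
    (Finset.univ.image (fun i : Fin n => Pi.single i (1 : ℤ)))

open Finset

section

variable {n : ℕ}

theorem sum_Iic_single_even_iff (k a : Fin n) :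
    Even (∑ i ∈ Iic k, Pi.single a (1 : ℤ) i) ↔ k < a := by
  rw [sum_pi_single']
  by_cases h : a ≤ k <;> simp [h, lt_iff_not_ge]

theorem not_two_dvd_sum_Iic_single_sub_single_iff {k i j : Fin n} (hij : i < j) :
    ¬ 2 ∣ ∑ l ∈ Iic k, (Pi.single i 1 - Pi.single j 1 : Fin n → ℤ) l ↔ i ≤ k ∧ k < j := by
  simp only [Pi.sub_apply, sum_sub_distrib, ← even_iff_two_dvd, Int.even_sub,
    sum_Iic_single_even_iff]
  omega

theorem not_two_dvd_sum_Iic_single_add_single_iff {k i j : Fin n} (hij : i < j) :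
    ¬ 2 ∣ ∑ l ∈ Iic k, (Pi.single i 1 + Pi.single j 1 : Fin n → ℤ) l ↔ i ≤ k ∧ k < j := by
  simp only [Pi.add_apply, sum_add_distrib, ← even_iff_two_dvd, Int.even_add,
    sum_Iic_single_even_iff]
  omega

theorem card_filter_lt_filter_le_and_lt (k : Fin n) :
    #{p ∈ univ.filter (fun p : Fin n × Fin n => p.1 < p.2) | p.1 ≤ k ∧ k < p.2} =
      (k + 1) * (n - (k + 1)) := by
  have h : {p ∈ univ.filter (fun p : Fin n × Fin n => p.1 < p.2) | p.1 ≤ k ∧ k < p.2} =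
      Iic k ×ˢ Ioi k := by
    ext ⟨i, j⟩
    simp only [mem_filter, mem_univ, true_and, mem_product, mem_Iic, mem_Ioi]
    omega
  rw [h, card_product, Fin.card_Iic, Fin.card_Ioi, Nat.sub_sub, Nat.add_comm 1]

theorem single_sub_single_injOn :
    Set.InjOn (fun p : Fin n × Fin n => (Pi.single p.1 1 - Pi.single p.2 1 : Fin n → ℤ))
      {p | p.1 < p.2} := by
  rintro ⟨i, j⟩ (hij : i < j) ⟨i', j'⟩ (hij' : i' < j') h
  have hi := congrFun h i
  have hj := congrFun h j
  simp only [Pi.sub_apply, Pi.single_apply] at hi hj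
  rw [Prod.mk.injEq]
  split_ifs at hi hj <;> omega

theorem single_add_single_injOn :
    Set.InjOn (fun p : Fin n × Fin n => (Pi.single p.1 1 + Pi.single p.2 1 : Fin n → ℤ))
      {p | p.1 < p.2} := by
  rintro ⟨i, j⟩ (hij : i < j) ⟨i', j'⟩ (hij' : i' < j') h
  have hi := congrFun h i
  have hj := congrFun h j
  have hi' := congrFun h i'
  simp only [Pi.add_apply, Pi.single_apply] at hi hj hi'
  rw [Prod.mk.injEq]
  split_ifs at hi hj hi' <;> omega

theorem single_one_injective : Function.Injective (fun i : Fin n => (Pi.single i 1 : Fin n → ℤ)) :=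
  fun i j h => by simpa [Pi.single_apply] using congrFun h i

theorem card_filter_bnPosRoots (P : (Fin n → ℤ) → Prop) [DecidablePred P] :
    #{v ∈ BnPosRoots n | P v} =
      #{p ∈ univ.filter (fun p : Fin n × Fin n => p.1 < p.2) |
          P (Pi.single p.1 1 - Pi.single p.2 1)} +
        #{p ∈ univ.filter (fun p : Fin n × Fin n => p.1 < p.2) |
          P (Pi.single p.1 1 + Pi.single p.2 1)} +
        #{i | P (Pi.single i 1)} := by
  have h_sub_add : Disjoint
      ((univ.filter (fun p : Fin n × Fin n => p.1 < p.2)).image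
        (fun p => (Pi.single p.1 1 - Pi.single p.2 1 : Fin n → ℤ)))
      ((univ.filter (fun p : Fin n × Fin n => p.1 < p.2)).image
        (fun p => (Pi.single p.1 1 + Pi.single p.2 1 : Fin n → ℤ))) := by
    simp only [disjoint_iff_ne, mem_image]
    rintro _ ⟨p, -, rfl⟩ _ ⟨q, -, rfl⟩ h
    simpa [sum_sub_distrib, sum_add_distrib] using congrArg (fun v : Fin n → ℤ => ∑ j, v j) h
  have h_pairs_single : Disjoint
      ((univ.filter (fun p : Fin n × Fin n => p.1 < p.2)).image
        (fun p => (Pi.single p.1 1 - Pi.single p.2 1 : Fin n → ℤ)) ∪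
      (univ.filter (fun p : Fin n × Fin n => p.1 < p.2)).image
        (fun p => (Pi.single p.1 1 + Pi.single p.2 1 : Fin n → ℤ)))
      (univ.image (fun i : Fin n => (Pi.single i 1 : Fin n → ℤ))) := by
    simp only [disjoint_iff_ne, mem_union, mem_image]
    rintro _ (⟨p, -, rfl⟩ | ⟨p, -, rfl⟩) _ ⟨i, -, rfl⟩ h <;>
      simpa [sum_sub_distrib, sum_add_distrib] using congrArg (fun v : Fin n → ℤ => ∑ j, v j) h
  rw [BnPosRoots, filter_union, card_union_of_disjoint (disjoint_filter_filter h_pairs_single),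
    filter_union, card_union_of_disjoint (disjoint_filter_filter h_sub_add),
    filter_image, filter_image, filter_image,
    card_image_of_injOn, card_image_of_injOn,
    card_image_of_injective _ single_one_injective]
  · exact single_add_single_injOn.mono fun p hp => (mem_filter.1 (mem_filter.1 hp).1).2
  · exact single_sub_single_injOn.mono fun p hp => (mem_filter.1 (mem_filter.1 hp).1).2

end

/-- For B_n with simple roots α_i = e_i − e_{i+1} (i < n) and α_n = e_n, if
exactly the simple root α_k is painted noncompact, the number of noncompact positive roots
(those whose expansion involves α_k an odd number of times; the coefficient of α_k of a
vector v is the partial sum Σ_{i ≤ k} v_i) equals k(2n − 2k + 1) (here k is 1-indexed;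
with the 0-indexed k : Fin n below this reads (k+1)·(2(n − (k+1)) + 1)). -/
theorem stmt13 (n : ℕ) (k : Fin n) :
    ((BnPosRoots n).filter
        (fun v => ¬ (2 ∣ ∑ i ∈ Finset.Iic k, v i))).card =
      (k.val + 1) * (2 * (n - (k.val + 1)) + 1) := by
  have h_sub : {p ∈ univ.filter (fun p : Fin n × Fin n => p.1 < p.2) |
      ¬ 2 ∣ ∑ l ∈ Iic k, (Pi.single p.1 1 - Pi.single p.2 1 : Fin n → ℤ) l} =
      {p ∈ univ.filter (fun p : Fin n × Fin n => p.1 < p.2) | p.1 ≤ k ∧ k < p.2} :=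
    filter_congr fun p hp => not_two_dvd_sum_Iic_single_sub_single_iff (mem_filter.1 hp).2
  have h_add : {p ∈ univ.filter (fun p : Fin n × Fin n => p.1 < p.2) |
      ¬ 2 ∣ ∑ l ∈ Iic k, (Pi.single p.1 1 + Pi.single p.2 1 : Fin n → ℤ) l} =
      {p ∈ univ.filter (fun p : Fin n × Fin n => p.1 < p.2) | p.1 ≤ k ∧ k < p.2} :=
    filter_congr fun p hp => not_two_dvd_sum_Iic_single_add_single_iff (mem_filter.1 hp).2
  have h_single :
      ({i | ¬ 2 ∣ ∑ l ∈ Iic k, (Pi.single i 1 : Fin n → ℤ) l} : Finset (Fin n)) = Iic k := by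
    ext i
    simp only [mem_filter, mem_univ, true_and, mem_Iic, ← even_iff_two_dvd,
      sum_Iic_single_even_iff, not_lt]
  rw [card_filter_bnPosRoots, h_sub, h_add, h_single, card_filter_lt_filter_le_and_lt,
    Fin.card_Iic]
  ring
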